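/- arXiv:1508.01348 — 2 statements merged into one kernel-verified Lean document; each statement's English description precedes it below -/
import Mathlib

section
/- Let n ≥ 3 with n ≠ 4. Let K be a field with algebraic closure K̄, and let L₁,…,L_r be intermediate fields of K̄/K, each finite-dimensional and Galois over K, such that each Galois group Gal(Lᵢ/K) is isomorphic to a normal subgroup of the symmetric group Sₙ. Let L be the compositum of L₁,…,L_r. Then there is no surjective group homomorphism from Gal(L/K) onto the Weyl group W(Bₙ) = V ⋊ Sₙ, and no surjective group homomorphism from Gal(L/K) onto the Weyl group W(Dₙ) = Vₑ ⋊ Sₙ. -/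
/-!
The restrictions `Gal(L/K) → Gal(Lᵢ/K)` are surjective and jointly injective, so the second
derived subgroup `Gal(L/K)''` is a subdirect product of the groups `Gal(Lᵢ/K)'' ≅ Hᵢ''`. For a
normal subgroup `H` of `Sₙ` the group `H''` is trivial (`n = 3`, or `H = 1`) or `Aₙ` (`n ≥ 5`),
hence trivial or nonabelian simple. In a subdirect product of such groups every normal subgroup
is perfect, and this property passes to quotients. A surjection `Gal(L/K) → W` maps `Gal(L/K)''`
onto `W''`, but `W''` meets the abelian kernel of `W → Sₙ` in a nontrivial (hence non-perfect)
normal subgroup of `W''`.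
-/

open Multiplicative

abbrev Vn (n : ℕ) := Multiplicative (Fin n → ZMod 2)

def permAut (n : ℕ) : Equiv.Perm (Fin n) →* MulAut (Vn n) where
  toFun σ :=
    { toFun := fun v => ofAdd fun i => toAdd v (σ⁻¹ i)
      invFun := fun v => ofAdd fun i => toAdd v (σ i)
      left_inv := fun v => by simp
      right_inv := fun v => by simp
      map_mul' := fun v w => rfl }
  map_one' := rfl
  map_mul' := fun σ τ => rfl

@[simp] lemma permAut_apply (n : ℕ) (σ : Equiv.Perm (Fin n)) (v : Vn n) (i : Fin n) :
    toAdd (permAut n σ v) i = toAdd v (σ⁻¹ i) := rfl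

def Ve (n : ℕ) : Subgroup (Vn n) where
  carrier := {v | ∑ i, toAdd v i = 0}
  one_mem' := by simp
  mul_mem' := by
    intro a b ha hb
    simp only [Set.mem_setOf_eq, toAdd_mul, Pi.add_apply, Finset.sum_add_distrib] at *
    rw [ha, hb, add_zero]
  inv_mem' := by
    intro a ha
    simp only [Set.mem_setOf_eq, toAdd_inv, Pi.neg_apply, Finset.sum_neg_distrib] at *
    rw [ha, neg_zero]

lemma permAut_mem_Ve {n : ℕ} (σ : Equiv.Perm (Fin n)) {v : Vn n} (hv : v ∈ Ve n) :
    permAut n σ v ∈ Ve n := by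
  have h : ∑ i, toAdd v (σ⁻¹ i) = ∑ i, toAdd v i := Equiv.sum_comp σ⁻¹ (toAdd v)
  show ∑ i, toAdd (permAut n σ v) i = 0
  exact h.trans hv

def permAutVe (n : ℕ) : Equiv.Perm (Fin n) →* MulAut (Ve n) where
  toFun σ :=
    { toFun := fun v => ⟨permAut n σ (v : Vn n), permAut_mem_Ve σ v.2⟩
      invFun := fun v => ⟨permAut n σ⁻¹ (v : Vn n), permAut_mem_Ve σ⁻¹ v.2⟩
      left_inv := fun v => Subtype.ext <| Multiplicative.toAdd.injective <| funext fun i => by simp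
      right_inv := fun v => Subtype.ext <| Multiplicative.toAdd.injective <| funext fun i => by simp
      map_mul' := fun v w => Subtype.ext (map_mul (permAut n σ) (v : Vn n) (w : Vn n)) }
  map_one' := rfl
  map_mul' := fun σ τ => rfl

/-- The Weyl group of `Bₙ` (equivalently `Cₙ`). -/
abbrev WB (n : ℕ) := Vn n ⋊[permAut n] Equiv.Perm (Fin n)

/-- The Weyl group of `Dₙ`. -/
abbrev WD (n : ℕ) := Ve n ⋊[permAutVe n] Equiv.Perm (Fin n)

open Function Equiv Subgroup SemidirectProduct
open scoped commutatorElement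

/-- Equivalent to being trivial or nonabelian simple, since a nontrivial perfect group is
nonabelian; in this form the trivial group needs no separate treatment. -/
def IsTrivialOrNonabelianSimple (G : Type*) [Group G] : Prop :=
  (∀ N : Subgroup G, N.Normal → N = ⊥ ∨ N = ⊤) ∧ commutator G = ⊤

namespace IsTrivialOrNonabelianSimple

variable {G H : Type*} [Group G] [Group H]

theorem of_subsingleton [Subsingleton G] : IsTrivialOrNonabelianSimple G :=
  ⟨fun _ _ => Or.inl (Subsingleton.elim _ _), Subsingleton.elim _ _⟩

theorem of_isSimpleGroup [IsSimpleGroup G] (h : commutator G = ⊤) :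
    IsTrivialOrNonabelianSimple G :=
  ⟨fun _ hN => hN.eq_bot_or_eq_top, h⟩

theorem of_surjective (hG : IsTrivialOrNonabelianSimple G) (f : G →* H) (hf : Surjective f) :
    IsTrivialOrNonabelianSimple H := by
  refine ⟨fun N hN => ?_, ?_⟩
  · rw [← map_comap_eq_self_of_surjective hf N]
    rcases hG.1 _ (hN.comap f) with h | h
    · exact Or.inl (by rw [h, Subgroup.map_bot])
    · exact Or.inr (by rw [h, map_top_of_surjective f hf])
  · rw [_root_.commutator, ← map_top_of_surjective f hf, ← map_commutator, ← _root_.commutator,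
      hG.2]

end IsTrivialOrNonabelianSimple

def AllNormalSubgroupsPerfect (G : Type*) [Group G] : Prop :=
  ∀ B : Subgroup G, B.Normal → ⁅B, B⁆ = B

theorem le_of_commutator_le_of_inf_le {D : Type*} [Group D] {N B M : Subgroup D} [N.Normal]
    [hB : B.Normal] (hN : IsTrivialOrNonabelianSimple (D ⧸ N)) (hBM : ⁅B, B⁆ ≤ M)
    (hBN : B ⊓ N ≤ M) : B ≤ M := by
  rcases hN.1 _ (hB.map _ (QuotientGroup.mk'_surjective N)) with h | h
  · rw [Subgroup.map_eq_bot_iff, QuotientGroup.ker_mk'] at h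
    rwa [inf_eq_left.mpr h] at hBN
  · have hsup : ⁅B, B⁆ ⊔ N = ⊤ := by
      rw [← QuotientGroup.ker_mk' N, ← comap_map_eq, map_commutator, h, ← _root_.commutator,
        hN.2, comap_top]
    intro b hb
    have hb' : b ∈ ⁅B, B⁆ ⊔ N := hsup ▸ mem_top b
    obtain ⟨c, hc, m, hm, rfl⟩ := mem_sup_of_normal_right.mp hb'
    have hmB : m ∈ B := by
      simpa using B.mul_mem (B.inv_mem (commutator_le_left B B hc)) hb
    exact mul_mem (hBM hc) (hBN ⟨hmB, hm⟩)

theorem allNormalSubgroupsPerfect_of_iInf_eq_bot {D ι : Type*} [Group D] [Finite ι]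
    (N : ι → Subgroup D) [∀ i, (N i).Normal] (hN : ∀ i, IsTrivialOrNonabelianSimple (D ⧸ N i))
    (hbot : ⨅ i, N i = ⊥) : AllNormalSubgroupsPerfect D := by
  classical
  have key : ∀ s : Finset ι, ∀ (M B : Subgroup D), B.Normal → ⁅B, B⁆ ≤ M →
      B ⊓ ⨅ i ∈ s, N i ≤ M → B ≤ M := by
    intro s
    induction s using Finset.induction_on with
    | empty => intro M B _ _ h; simpa using h
    | insert j s _ ih =>
      intro M B _ hBM h
      refine le_of_commutator_le_of_inf_le (hN j) hBM (ih M _ inferInstance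
        ((commutator_mono inf_le_left inf_le_left).trans hBM) ?_)
      rwa [Finset.iInf_insert, ← inf_assoc] at h
  have := Fintype.ofFinite ι
  intro B hB
  exact le_antisymm (commutator_le_left B B) (key Finset.univ _ B hB le_rfl (by simp [hbot]))

theorem AllNormalSubgroupsPerfect.of_surjective {D Q : Type*} [Group D] [Group Q]
    (hD : AllNormalSubgroupsPerfect D) (f : D →* Q) (hf : Surjective f) :
    AllNormalSubgroupsPerfect Q := by
  intro A hA
  have := congrArg (map f) (hD _ (hA.comap f))
  rwa [map_commutator, map_comap_eq_self_of_surjective hf] at this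

theorem AllNormalSubgroupsPerfect.derivedSeries_of_surjective {D Q : Type*} [Group D] [Group Q]
    {k : ℕ} (hD : AllNormalSubgroupsPerfect (derivedSeries D k)) (f : D →* Q)
    (hf : Surjective f) : AllNormalSubgroupsPerfect (derivedSeries Q k) :=
  let e := MulEquiv.subgroupCongr (map_derivedSeries_eq hf k)
  hD.of_surjective ((e : _ →* _).comp (f.subgroupMap _))
    (e.surjective.comp (f.subgroupMap_surjective _))

theorem allNormalSubgroupsPerfect_derivedSeries {G ι : Type*} [Group G] [Finite ι]
    {T : ι → Type*} [∀ i, Group (T i)] (ρ : ∀ i, G →* T i) (hρ : ∀ i, Surjective (ρ i))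
    (hker : ⨅ i, (ρ i).ker = ⊥) (k : ℕ)
    (hT : ∀ i, IsTrivialOrNonabelianSimple (derivedSeries (T i) k)) :
    AllNormalSubgroupsPerfect (derivedSeries G k) := by
  refine allNormalSubgroupsPerfect_of_iInf_eq_bot (fun i => ((ρ i).subgroupMap _).ker)
    (fun i => ?_) ?_
  · let e := (MulEquiv.subgroupCongr (map_derivedSeries_eq (hρ i) k)).symm.trans
      (QuotientGroup.quotientKerEquivOfSurjective _ ((ρ i).subgroupMap_surjective _)).symm
    exact (hT i).of_surjective e e.surjective
  · rw [eq_bot_iff]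
    intro x hx
    have : (x : G) ∈ ⨅ i, (ρ i).ker := mem_iInf.mpr fun i => by
      simpa [MonoidHom.mem_ker, Subtype.ext_iff] using mem_iInf.mp hx i
    rw [hker, mem_bot] at this
    exact Subtype.ext this

theorem derivedSeries_perm_fin_three : derivedSeries (Perm (Fin 3)) 2 = ⊥ := by
  have hcomm : ⁅alternatingGroup (Fin 3), alternatingGroup (Fin 3)⁆ = ⊥ := by
    rw [eq_bot_iff, commutator_le]
    intro a ha b hb
    rw [Perm.mem_alternatingGroup] at ha hb
    rw [mem_bot, commutatorElement_eq_one_iff_mul_comm]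
    revert a b
    decide
  rw [eq_bot_iff, ← hcomm, derivedSeries_succ, derivedSeries_one]
  exact commutator_mono alternatingGroup.commutator_perm_le alternatingGroup.commutator_perm_le

theorem map_subtype_derivedSeries_two_of_alternatingGroup_le {α : Type*} [Fintype α]
    [DecidableEq α] (h5 : 5 ≤ Nat.card α) {H : Subgroup (Perm α)}
    (hH : alternatingGroup α ≤ H) :
    (derivedSeries H 2).map H.subtype = alternatingGroup α := by
  have hA := commutator_alternatingGroup_eq_self h5
  have h1 : ⁅H, H⁆ = alternatingGroup α :=
    le_antisymm ((commutator_mono le_top le_top).trans alternatingGroup.commutator_perm_le)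
      (hA.ge.trans (commutator_mono hH hH))
  rw [derivedSeries_succ, map_commutator, derivedSeries_one, map_subtype_commutator, h1, hA]

theorem isTrivialOrNonabelianSimple_derivedSeries_two {n : ℕ} (hn : 3 ≤ n) (hn4 : n ≠ 4)
    (H : Subgroup (Perm (Fin n))) [H.Normal] :
    IsTrivialOrNonabelianSimple (derivedSeries H 2) := by
  suffices h : IsTrivialOrNonabelianSimple ((derivedSeries H 2).map H.subtype) by
    let e := ((derivedSeries H 2).equivMapOfInjective _ H.subtype_injective).symm
    exact h.of_surjective e e.surjective
  obtain rfl | h5 : n = 3 ∨ 5 ≤ Nat.card (Fin n) := by rw [Nat.card_fin]; omega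
  · rw [eq_bot_iff.mpr ((map_derivedSeries_le_derivedSeries _ 2).trans
      derivedSeries_perm_fin_three.le)]
    exact .of_subsingleton
  · rcases bot_or_nontrivial H with hH | hH
    · rw [eq_bot_iff.mpr ((map_subtype_le _).trans hH.le)]
      exact .of_subsingleton
    · rw [map_subtype_derivedSeries_two_of_alternatingGroup_le h5
        (Perm.alternatingGroup_le_of_normal h5 hH)]
      have := alternatingGroup.isSimpleGroup h5
      exact .of_isSimpleGroup (commutator_alternatingGroup_eq_top h5)

namespace SemidirectProduct

variable {N G : Type*} [Group G]

theorem commutatorElement_inl_inr [Group N] {φ : G →* MulAut N} (n : N) (g : G) :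
    ⁅(inl n : N ⋊[φ] G), (inr g : N ⋊[φ] G)⁆ = inl (n * φ g n⁻¹) := by
  rw [commutatorElement_def, map_mul, ← map_inv, ← map_inv, inl_aut]
  group

theorem inl_mul_inv_mem_derivedSeries_succ [Group N] {φ : G →* MulAut N} {k : ℕ} {n : N} {g : G}
    (hn : inl n ∈ derivedSeries (N ⋊[φ] G) k) (hg : inr g ∈ derivedSeries (N ⋊[φ] G) k) :
    (inl (n * φ g n⁻¹) : N ⋊[φ] G) ∈ derivedSeries (N ⋊[φ] G) (k + 1) := by
  rw [← commutatorElement_inl_inr, derivedSeries_succ]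
  exact commutator_mem_commutator hn hg

theorem eq_one_of_inl_mem_derivedSeries [CommGroup N] {φ : G →* MulAut N} {k : ℕ}
    (hW : AllNormalSubgroupsPerfect (derivedSeries (N ⋊[φ] G) k)) {n : N}
    (hn : inl n ∈ derivedSeries (N ⋊[φ] G) k) : n = 1 := by
  set A := (rightHom : N ⋊[φ] G →* G).ker.subgroupOf (derivedSeries _ k)
  have hA : ⁅A, A⁆ = ⊥ := by
    rw [eq_bot_iff, commutator_le]
    rintro a ha b hb
    rw [mem_subgroupOf, ← range_inl_eq_ker_rightHom] at ha hb
    obtain ⟨x, hx⟩ := ha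
    obtain ⟨y, hy⟩ := hb
    rw [mem_bot, commutatorElement_eq_one_iff_mul_comm, ← Subtype.coe_inj, coe_mul, coe_mul, ← hx,
      ← hy, ← map_mul, ← map_mul, mul_comm]
  have hmem : (⟨inl n, hn⟩ : derivedSeries _ k) ∈ A := by
    simp [A, mem_subgroupOf]
  rw [← hW A ((rightHom.normal_ker).subgroupOf _), hA, mem_bot] at hmem
  exact inl_injective (congrArg Subtype.val hmem)

end SemidirectProduct

theorem exists_inl_mem_derivedSeries_two_WD {n : ℕ} (hn : 3 ≤ n) :
    ∃ v : Ve n, v ≠ 1 ∧ (inl v : WD n) ∈ derivedSeries (WD n) 2 := by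
  let a : Fin n := ⟨0, by omega⟩
  let b : Fin n := ⟨1, by omega⟩
  let c : Fin n := ⟨2, by omega⟩
  have hab : a ≠ b := by simp [a, b, Fin.ext_iff]
  have hac : a ≠ c := by simp [a, c, Fin.ext_iff]
  have hbc : b ≠ c := by simp [b, c, Fin.ext_iff]
  let u : Ve n := ⟨ofAdd (Pi.single a 1 + Pi.single c 1), by
    show ∑ i, (Pi.single a 1 + Pi.single c 1 : Fin n → ZMod 2) i = 0
    simp only [Pi.add_apply, Finset.sum_add_distrib, Finset.sum_pi_single', Finset.mem_univ,
      if_true]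
    decide⟩
  let w := u * permAutVe n (swap b c) u⁻¹
  let σ : Perm (Fin n) := ⁅swap a b, swap a c⁆
  -- `w = e_b + e_c`, and the witness is `e_a + e_b`
  refine ⟨w * permAutVe n σ w⁻¹, fun h => ?_, ?_⟩
  · have ha : toAdd ((w * permAutVe n σ w⁻¹ : Ve n) : Vn n) a = 1 := by
      simp [w, u, σ, permAutVe, commutatorElement_def, swap_apply_of_ne_of_ne, hab, hac, hbc,
        hab.symm, hac.symm, CharTwo.add_self_eq_zero]
    rw [h] at ha
    exact zero_ne_one ha
  · refine inl_mul_inv_mem_derivedSeries_succ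
      (inl_mul_inv_mem_derivedSeries_succ (mem_top _) (mem_top _)) ?_
    refine map_derivedSeries_le_derivedSeries (inr : Perm (Fin n) →* WD n) 1 ⟨σ, ?_, rfl⟩
    rw [derivedSeries_one]
    exact commutator_mem_commutator (mem_top _) (mem_top _)

theorem exists_inl_mem_derivedSeries_two_WB {n : ℕ} (hn : 3 ≤ n) :
    ∃ v : Vn n, v ≠ 1 ∧ (inl v : WB n) ∈ derivedSeries (WB n) 2 := by
  obtain ⟨v, hv1, hv⟩ := exists_inl_mem_derivedSeries_two_WD hn
  exact ⟨v, by simpa using hv1, map_derivedSeries_le_derivedSeries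
    (SemidirectProduct.map (φ₂ := permAut n) (Ve n).subtype (MonoidHom.id _) fun _ => rfl) 2
    ⟨_, hv, rfl⟩⟩

namespace IntermediateField

variable {F E : Type*} [Field F] [Field E] [Algebra F E]

theorem fixingSubgroup_iSup {ι : Sort*} (L : ι → IntermediateField F E) :
    fixingSubgroup (⨆ i, L i) = ⨅ i, fixingSubgroup (L i) := by
  refine le_antisymm (le_iInf fun i => fixingSubgroup_antitone (le_iSup L i)) fun σ hσ => ?_
  rw [← Subgroup.zpowers_le, ← le_iff_le]
  exact iSup_le fun i => (le_iff_le _ _).mpr (Subgroup.zpowers_le.mpr (Subgroup.mem_iInf.mp hσ i))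

theorem iSup_restrict_le_iSup_eq_top {ι : Sort*} (L : ι → IntermediateField F E) :
    ⨆ i, restrict (le_iSup L i) = ⊤ := by
  apply lift_injective
  rw [lift_top, lift, map_iSup]
  exact iSup_congr fun i => lift_restrict (le_iSup L i)

theorem exists_surjective_restrict_iSup {ι : Type*} (L : ι → IntermediateField F E)
    [∀ i, Normal F (L i)] :
    ∃ ρ : ∀ i, Gal(↥(⨆ i, L i)/F) →* Gal(↥(L i)/F),
      (∀ i, Surjective (ρ i)) ∧ ⨅ i, (ρ i).ker = ⊥ := by
  have := normal_iSup F E L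
  have (i : ι) : Normal F (restrict (le_iSup L i)) := Normal.of_algEquiv (restrictAlgEquiv _)
  let e (i : ι) := AlgEquiv.autCongr (restrictAlgEquiv (le_iSup L i)).symm
  refine ⟨fun i => (e i : _ →* _).comp (AlgEquiv.restrictNormalHom (restrict (le_iSup L i))),
    fun i => (e i).surjective.comp (AlgEquiv.restrictNormalHom_surjective _), ?_⟩
  simp_rw [MonoidHom.ker_mulEquiv_comp, restrictNormalHom_ker]
  rw [← fixingSubgroup_iSup, iSup_restrict_le_iSup_eq_top, fixingSubgroup_top]

end IntermediateField

theorem no_surjection_from_Sn_compositum_general (n : ℕ) (hn : 3 ≤ n) (hn4 : n ≠ 4)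
    (K Kbar : Type*) [Field K] [Field Kbar] [Algebra K Kbar]
    (r : ℕ) (L : Fin r → IntermediateField K Kbar)
    (hgal : ∀ i, IsGalois K ↥(L i))
    (hiso : ∀ i, ∃ H : Subgroup (Equiv.Perm (Fin n)), H.Normal ∧
      Nonempty ((↥(L i) ≃ₐ[K] ↥(L i)) ≃* ↥H)) :
    (∀ f : (↥(⨆ i, L i : IntermediateField K Kbar) ≃ₐ[K]
        ↥(⨆ i, L i : IntermediateField K Kbar)) →* WB n, ¬ Function.Surjective f) ∧
    (∀ f : (↥(⨆ i, L i : IntermediateField K Kbar) ≃ₐ[K]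
        ↥(⨆ i, L i : IntermediateField K Kbar)) →* WD n, ¬ Function.Surjective f) := by
  have (i : Fin r) : Normal K (L i) := (hgal i).to_normal
  obtain ⟨ρ, hρ, hker⟩ := IntermediateField.exists_surjective_restrict_iSup L
  choose H hH e using hiso
  have hperfect := allNormalSubgroupsPerfect_derivedSeries
    (fun i => ((e i).some : _ →* H i).comp (ρ i)) (fun i => (e i).some.surjective.comp (hρ i))
    (by simpa only [MonoidHom.ker_mulEquiv_comp] using hker) 2
    (fun i => have := hH i; isTrivialOrNonabelianSimple_derivedSeries_two hn hn4 (H i))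
  obtain ⟨v, hv1, hv⟩ := exists_inl_mem_derivedSeries_two_WB hn
  obtain ⟨w, hw1, hw⟩ := exists_inl_mem_derivedSeries_two_WD hn
  exact ⟨fun f hf => hv1 (eq_one_of_inl_mem_derivedSeries
      (hperfect.derivedSeries_of_surjective f hf) hv),
    fun f hf => hw1 (eq_one_of_inl_mem_derivedSeries
      (hperfect.derivedSeries_of_surjective f hf) hw)⟩

/-- Let `n ≥ 3`, `n ≠ 4`.  Let `K` be a field with algebraic closure `K̄`, and let
`L₁, …, L_r` be intermediate fields of `K̄/K`, each finite-dimensional and Galois over `K`,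
such that each `Gal(Lᵢ/K)` is isomorphic to a normal subgroup of `Sₙ`.  Let `L` be the
compositum of the `Lᵢ`.  Then there is no surjective group homomorphism from `Gal(L/K)`
onto `W(Bₙ) = V ⋊ Sₙ`, and none onto `W(Dₙ) = Vₑ ⋊ Sₙ`. -/
theorem no_surjection_from_Sn_compositum (n : ℕ) (hn : 3 ≤ n) (hn4 : n ≠ 4)
    (K Kbar : Type*) [Field K] [Field Kbar] [Algebra K Kbar] [IsAlgClosure K Kbar]
    (r : ℕ) (L : Fin r → IntermediateField K Kbar)
    (hfd : ∀ i, FiniteDimensional K ↥(L i)) (hgal : ∀ i, IsGalois K ↥(L i))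
    (hiso : ∀ i, ∃ H : Subgroup (Equiv.Perm (Fin n)), H.Normal ∧
      Nonempty ((↥(L i) ≃ₐ[K] ↥(L i)) ≃* ↥H)) :
    (∀ f : (↥(⨆ i, L i : IntermediateField K Kbar) ≃ₐ[K]
        ↥(⨆ i, L i : IntermediateField K Kbar)) →* WB n, ¬ Function.Surjective f) ∧
    (∀ f : (↥(⨆ i, L i : IntermediateField K Kbar) ≃ₐ[K]
        ↥(⨆ i, L i : IntermediateField K Kbar)) →* WD n, ¬ Function.Surjective f) :=
  no_surjection_from_Sn_compositum_general n hn hn4 K Kbar r L hgal hiso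
end

section
/- Let U be a group admitting an injective homomorphism into a finite product ∏_{i=1}^r Uᵢ, where each Uᵢ is isomorphic to a normal subgroup of S₄ × ZMod 2 (the Weyl group of B₃). Then there is no surjective group homomorphism from U onto the Weyl group W(D₄) = Vₑ ⋊ S₄. -/
open Multiplicative

/-!
The group word `⁅⁅a, b⁆, ⁅c, d⁆⁆²` is a law of `S₄` (and hence of `S₄ × ℤ/2`): commutators of
`S₄` are even, and any commutator of two elements of `A₄` lies in the Klein four-group, which has
exponent `2`. Laws pass to subgroups, products and quotients, so the law holds in `U` and would
hold in any quotient of `U`. It fails in `W(D₄)`, witnessed by an explicit quadruple.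
-/

open scoped commutatorElement

def SatisfiesDoubleCommutatorSqLaw (G : Type*) [Group G] : Prop :=
  ∀ a b c d : G, ⁅⁅a, b⁆, ⁅c, d⁆⁆ ^ 2 = 1

namespace SatisfiesDoubleCommutatorSqLaw

variable {G K : Type*} [Group G] [Group K]

lemma of_injective (φ : K →* G) (hφ : Function.Injective φ)
    (hG : SatisfiesDoubleCommutatorSqLaw G) : SatisfiesDoubleCommutatorSqLaw K := by
  intro a b c d
  apply hφ
  simpa only [map_pow, map_commutatorElement, map_one] using hG _ _ _ _

lemma of_surjective (φ : G →* K) (hφ : Function.Surjective φ)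
    (hG : SatisfiesDoubleCommutatorSqLaw G) : SatisfiesDoubleCommutatorSqLaw K := by
  intro a b c d
  obtain ⟨a, rfl⟩ := hφ a
  obtain ⟨b, rfl⟩ := hφ b
  obtain ⟨c, rfl⟩ := hφ c
  obtain ⟨d, rfl⟩ := hφ d
  simp only [← map_commutatorElement, ← map_pow, hG a b c d, map_one]

lemma pi {ι : Type*} {H : ι → Type*} [∀ i, Group (H i)]
    (h : ∀ i, SatisfiesDoubleCommutatorSqLaw (H i)) :
    SatisfiesDoubleCommutatorSqLaw (∀ i, H i) := by
  intro a b c d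
  funext i
  simpa [commutatorElement_def, pow_two] using h i (a i) (b i) (c i) (d i)

lemma prod (hG : SatisfiesDoubleCommutatorSqLaw G) (hK : SatisfiesDoubleCommutatorSqLaw K) :
    SatisfiesDoubleCommutatorSqLaw (G × K) := by
  intro a b c d
  have h₁ := hG a.1 b.1 c.1 d.1
  have h₂ := hK a.2 b.2 c.2 d.2
  simp only [commutatorElement_def, pow_two] at h₁ h₂ ⊢
  exact Prod.ext h₁ h₂

lemma of_commGroup {A : Type*} [CommGroup A] : SatisfiesDoubleCommutatorSqLaw A := by
  intro a b c d
  rw [commutatorElement_eq_one_iff_mul_comm.mpr (mul_comm _ _), one_pow]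

end SatisfiesDoubleCommutatorSqLaw

set_option maxRecDepth 10000 in
lemma Equiv.Perm.fin_four_commutatorElement_sq_eq_one {a b : Equiv.Perm (Fin 4)}
    (ha : Equiv.Perm.sign a = 1) (hb : Equiv.Perm.sign b = 1) : ⁅a, b⁆ ^ 2 = 1 := by
  revert a b
  decide

lemma Equiv.Perm.sign_commutatorElement {α : Type*} [DecidableEq α] [Fintype α]
    (a b : Equiv.Perm α) : Equiv.Perm.sign ⁅a, b⁆ = 1 := by
  rw [map_commutatorElement, commutatorElement_eq_one_iff_mul_comm.mpr (mul_comm _ _)]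

lemma satisfiesDoubleCommutatorSqLaw_perm_fin_four :
    SatisfiesDoubleCommutatorSqLaw (Equiv.Perm (Fin 4)) := fun a b c d =>
  Equiv.Perm.fin_four_commutatorElement_sq_eq_one
    (Equiv.Perm.sign_commutatorElement a b) (Equiv.Perm.sign_commutatorElement c d)

lemma ofAdd_zero_zero_one_one_mem_Ve : ofAdd ![(0 : ZMod 2), 0, 1, 1] ∈ Ve 4 := by
  show ∑ i, toAdd (ofAdd ![(0 : ZMod 2), 0, 1, 1]) i = 0
  decide

set_option maxRecDepth 10000 in
lemma not_satisfiesDoubleCommutatorSqLaw_WD_four : ¬ SatisfiesDoubleCommutatorSqLaw (WD 4) := by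
  intro h
  have hw := h ⟨1, Equiv.swap 2 3⟩ ⟨1, Equiv.swap 1 2⟩ ⟨1, Equiv.swap 1 2 * Equiv.swap 2 3⟩
    ⟨⟨_, ofAdd_zero_zero_one_one_mem_Ve⟩, Equiv.swap 0 1 * Equiv.swap 0 2⟩
  exact absurd (congrArg SemidirectProduct.left hw) (by decide)

/-- Let `U` be a group admitting an injective homomorphism into a finite product
`∏_{i=1}^r Uᵢ`, where each `Uᵢ` is isomorphic to a normal subgroup of `S₄ × ℤ/2ℤ`
(the Weyl group of `B₃`).  Then there is no surjective group homomorphism from `U`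
onto the Weyl group `W(D₄) = Vₑ ⋊ S₄`. -/
theorem no_surjection_onto_WD4 (r : ℕ) (Ui : Fin r → Type*) [∀ i, Group (Ui i)]
    (hUi : ∀ i, ∃ H : Subgroup (Equiv.Perm (Fin 4) × Multiplicative (ZMod 2)),
      H.Normal ∧ Nonempty (Ui i ≃* ↥H))
    (U : Type*) [Group U] (f : U →* ∀ i, Ui i) (hf : Function.Injective f)
    (g : U →* WD 4) : ¬ Function.Surjective g := by
  intro hg
  have hB₃ : SatisfiesDoubleCommutatorSqLaw (Equiv.Perm (Fin 4) × Multiplicative (ZMod 2)) :=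
    satisfiesDoubleCommutatorSqLaw_perm_fin_four.prod .of_commGroup
  have hUi' : ∀ i, SatisfiesDoubleCommutatorSqLaw (Ui i) := fun i => by
    obtain ⟨H, -, ⟨e⟩⟩ := hUi i
    exact hB₃.of_injective (H.subtype.comp e.toMonoidHom) (H.subtype_injective.comp e.injective)
  exact not_satisfiesDoubleCommutatorSqLaw_WD_four <|
    ((SatisfiesDoubleCommutatorSqLaw.pi hUi').of_injective f hf).of_surjective g hg
end
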